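/- arXiv:1707.05443 — 3 statements merged into one kernel-verified Lean document; each statement's English description precedes it below -/
import Mathlib

section
/- Let Γ be a finite connected graph with circuit rank β₁ = E - V + 1, and let u_1, u_2 be two distinct vertices joined by an edge e_0. Then the number of paths from u_1 to u_2 in Γ that avoid e_0 and are pairwise internally vertex-disjoint is at most β₁. In particular, if P denotes the number of internally-disjoint paths of length two from u_1 to u_2 avoiding e_0 and Q denotes the number of internally-disjoint paths of length three from u_1 to u_2 avoiding e_0 (with the paths counted by P and Q all pairwise internally disjoint), then P + Q ≤ β₁. -/
/-!
Fix a vertex `u` of a vertex set `S` of a connected graph and charge every vertex outside `S` to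
an edge joining it to a neighbour strictly closer to `u`. These edges are not spanned by `S`, and
they are distinct because the closer endpoint of such an edge identifies the charged vertex; so
the graph has at least `V - #S` edges besides those spanned by `S`. Take for `S` the vertices of
the paths. The paths are edge-disjoint and each has one more edge than interior vertices, so
together with `e₀` they span at least `#S + n - 1` edges, whence `E ≥ V + n - 1`.
-/

open Finset

namespace SimpleGraph

variable {V : Type*} {G : SimpleGraph V}

lemma Connected.exists_adj_dist_lt (hG : G.Connected) {u w : V} (hw : w ≠ u) :
    ∃ x, G.Adj w x ∧ G.dist x u < G.dist w u := by
  obtain ⟨q, hq⟩ := hG.exists_walk_length_eq_dist w u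
  cases q with
  | nil => exact absurd rfl hw
  | cons h q => exact ⟨_, h, hq ▸ (dist_le q).trans_lt (by simp)⟩

theorem Connected.card_add_card_compl_le_card_edgeFinset [Fintype V] [DecidableEq V]
    [DecidableRel G.Adj] (hG : G.Connected) {S : Finset V} (hS : S.Nonempty)
    {F : Finset (Sym2 V)} (hF : F ⊆ G.edgeFinset) (hFS : ∀ e ∈ F, ∀ v ∈ e, v ∈ S) :
    #F + #Sᶜ ≤ #G.edgeFinset := by
  obtain ⟨u, hu⟩ := hS
  choose! next hadj hdist using fun w (hw : w ∈ Sᶜ) =>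
    hG.exists_adj_dist_lt (u := u) (ne_of_mem_of_not_mem hu (mem_compl.1 hw)).symm
  have hmaps : ∀ w ∈ Sᶜ, s(w, next w) ∈ G.edgeFinset \ F := fun w hw =>
    mem_sdiff.2 ⟨mem_edgeFinset.2 (hadj w hw),
      fun he => mem_compl.1 hw (hFS _ he w (Sym2.mem_mk_left _ _))⟩
  have hinj : Set.InjOn (fun w => s(w, next w)) ↑(Sᶜ) := by
    intro w hw w' hw' h
    rcases Sym2.eq_iff.1 h with ⟨h, -⟩ | ⟨h, h'⟩
    · exact h
    · have := hdist w hw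
      have := hdist w' hw'
      rw [h', ← h] at *
      omega
  calc #F + #Sᶜ ≤ #F + #(G.edgeFinset \ F) := by
        gcongr; exact card_le_card_of_injOn _ hmaps hinj
    _ = #G.edgeFinset := by rw [add_comm, card_sdiff_add_card_eq_card hF]

namespace Walk

variable [DecidableEq V] {u v : V}

lemma IsPath.card_edges_toFinset {p : G.Walk u v} (hp : p.IsPath) :
    #p.edges.toFinset = p.length := by
  rw [List.toFinset_card_of_nodup hp.edges_nodup, length_edges]

lemma IsPath.card_support_toFinset_sdiff_add_one {p : G.Walk u v} (hp : p.IsPath) (huv : u ≠ v) :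
    #(p.support.toFinset \ {u, v}) + 1 = p.length := by
  have hsub : {u, v} ⊆ p.support.toFinset := by
    simp [insert_subset_iff, start_mem_support, end_mem_support]
  have hcard : #p.support.toFinset = p.length + 1 := by
    rw [List.toFinset_card_of_nodup hp.support_nodup, length_support]
  have := card_le_card hsub
  rw [card_sdiff_of_subset hsub, hcard, card_pair huv] at *
  omega

lemma disjoint_edges_toFinset_of_internally_disjoint {p q : G.Walk u v}
    (hp : s(u, v) ∉ p.edges) (hpq : ∀ w ∈ p.support, w ∈ q.support → w = u ∨ w = v) :
    Disjoint p.edges.toFinset q.edges.toFinset := by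
  rw [Finset.disjoint_left]
  intro e hep heq
  simp only [List.mem_toFinset] at hep heq
  induction e using Sym2.ind with
  | _ a b =>
  have hab := p.adj_of_mem_edges hep
  have ha := hpq a (p.fst_mem_support_of_mem_edges hep) (q.fst_mem_support_of_mem_edges heq)
  have hb := hpq b (p.snd_mem_support_of_mem_edges hep) (q.snd_mem_support_of_mem_edges heq)
  rcases ha with rfl | rfl <;> rcases hb with rfl | rfl
  · exact hab.ne rfl
  · exact hp hep
  · exact hp (Sym2.eq_swap ▸ hep)
  · exact hab.ne rfl

end Walk

end SimpleGraph

open SimpleGraph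

theorem disjoint_paths_le_circuit_rank_general {V : Type*} [Fintype V] [DecidableEq V]
    (Γ : SimpleGraph V) [DecidableRel Γ.Adj] (hconn : Γ.Connected)
    (u₁ u₂ : V) (hadj : Γ.Adj u₁ u₂)
    (n : ℕ) (p : Fin n → Γ.Path u₁ u₂)
    (havoid : ∀ i, s(u₁, u₂) ∉ (p i).1.edges)
    (hdisj : ∀ i j, i ≠ j → ∀ w, w ∈ (p i).1.support → w ∈ (p j).1.support →
      w = u₁ ∨ w = u₂) :
    (n : ℤ) ≤ (Γ.edgeFinset.card : ℤ) - (Fintype.card V : ℤ) + 1 := by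
  set interior : Fin n → Finset V := fun i => (p i).1.support.toFinset \ {u₁, u₂}
  set S : Finset V := {u₁, u₂} ∪ univ.biUnion interior
  set F : Finset (Sym2 V) := insert s(u₁, u₂) (univ.biUnion fun i => (p i).1.edges.toFinset)
  have hF : F ⊆ Γ.edgeFinset := by
    simp only [F, insert_subset_iff, mem_edgeFinset, biUnion_subset_iff_forall_subset]
    refine ⟨hadj, fun i _ e he => mem_edgeFinset.2 ((p i).1.edges_subset_edgeSet ?_)⟩
    simpa using he
  have hFS : ∀ e ∈ F, ∀ v ∈ e, v ∈ S := by
    intro e he v hv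
    simp only [S, interior, mem_union, mem_biUnion, mem_univ, true_and, mem_sdiff,
      List.mem_toFinset]
    refine (em _).imp_right fun hv₁₂ => ?_
    rcases mem_insert.1 he with rfl | he
    · exact absurd (by simpa using hv) hv₁₂
    · obtain ⟨i, -, he⟩ := mem_biUnion.1 he
      exact ⟨i, Walk.mem_support_of_mem_edges (List.mem_toFinset.1 he) hv, hv₁₂⟩
  have hcardF : #F = 1 + ∑ i, #(interior i) + n := by
    rw [card_insert_of_notMem (by simpa using havoid),
      card_biUnion fun i _ j _ hij => Walk.disjoint_edges_toFinset_of_internally_disjoint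
        (havoid i) (hdisj i j hij)]
    simp only [(p _).2.card_edges_toFinset, ← (p _).2.card_support_toFinset_sdiff_add_one hadj.ne,
      sum_add_distrib, interior, sum_const, card_univ, Fintype.card_fin, smul_eq_mul, mul_one]
    ring
  have hcardS : #S ≤ 2 + ∑ i, #(interior i) :=
    (card_union_le _ _).trans (add_le_add card_le_two card_biUnion_le)
  have key := hconn.card_add_card_compl_le_card_edgeFinset ⟨u₁, by simp [S]⟩ hF hFS
  rw [card_compl] at key
  have := card_le_univ S
  omega

/-- Let `Γ` be a finite connected graph with circuit rank `β₁ = E - V + 1` and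
let `u₁ ≠ u₂` be joined by an edge `e₀ = s(u₁,u₂)`.  Any family of pairwise
internally vertex-disjoint paths from `u₁` to `u₂` avoiding `e₀` has at most
`β₁` members.  (In particular `P + Q ≤ β₁` for the counts `P`, `Q` of such
paths of lengths two and three.) -/
theorem disjoint_paths_le_circuit_rank {V : Type*} [Fintype V] [DecidableEq V]
    (Γ : SimpleGraph V) [DecidableRel Γ.Adj] (hconn : Γ.Connected)
    (u₁ u₂ : V) (hne : u₁ ≠ u₂) (hadj : Γ.Adj u₁ u₂)
    (n : ℕ) (p : Fin n → Γ.Path u₁ u₂)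
    (havoid : ∀ i, s(u₁, u₂) ∉ (p i).1.edges)
    (hdisj : ∀ i j, i ≠ j → ∀ w, w ∈ (p i).1.support → w ∈ (p j).1.support →
      w = u₁ ∨ w = u₂) :
    (n : ℤ) ≤ (Γ.edgeFinset.card : ℤ) - (Fintype.card V : ℤ) + 1 :=
  disjoint_paths_le_circuit_rank_general Γ hconn u₁ u₂ hadj n p havoid hdisj
end

section
/- Let Γ be a finite simple graph and let Γ' be obtained from Γ by identifying two nonadjacent distinct vertices u_1 and u_2 into a single vertex u_{12} (and then simplifying by removing duplicate parallel edges). Then the number of triangles in Γ' equals the number of triangles in Γ, plus the number of paths of length three from u_1 to u_2 in Γ no interior vertex of which is adjacent to both u_1 and u_2, minus the number of 4-vertex subsets {u_1, u_2, w_1, w_2} such that w_1, w_2 are adjacent to each other and each of w_1, w_2 is adjacent to both u_1 and u_2. -/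
open scoped Classical in
/-- The number of triangles (3-cliques) of a finite simple graph. -/
noncomputable def triangleCount {V : Type*} [Fintype V] (G : SimpleGraph V) : ℕ :=
  (Finset.univ.filter fun t : Finset V =>
    t.card = 3 ∧ ∀ x ∈ t, ∀ y ∈ t, x ≠ y → G.Adj x y).card

/-!
Sort triangles by how they meet `{u₁, u₂}`. As `u₁ ≁ u₂`, no triangle of `Γ` contains both, and
triangles through a vertex `v` correspond to edges inside `N(v)`. In `Γ'` the vertex `u₂` is
isolated, triangles avoiding `u₁, u₂` are those of `Γ`, and triangles through `u₁` correspond to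
edges of `Γ` inside `N(u₁) ∪ N(u₂)`. By inclusion–exclusion these are the edges inside `N(u₁)`
or inside `N(u₂)`, less the edges inside `N(u₁) ∩ N(u₂)` (counted by `S`), plus the edges from
`N(u₁) \ N(u₂)` to `N(u₂) \ N(u₁)`, which are the middle edges of the paths counted by `Q`.
-/

open Finset

theorem Finset.card_add_card_filter_and {ι : Type*} [DecidableEq ι] (s : Finset ι)
    (p q : ι → Prop) [DecidablePred p] [DecidablePred q] :
    #s + #{x ∈ s | p x ∧ q x} =
      #{x ∈ s | p x} + #{x ∈ s | q x} + #{x ∈ s | ¬ p x ∧ ¬ q x} := by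
  have hunion := card_union_add_card_inter {x ∈ s | p x} {x ∈ s | q x}
  rw [← filter_or, ← filter_and] at hunion
  have hsplit := card_filter_add_card_filter_not (s := s) fun x => p x ∨ q x
  simp only [not_or] at hsplit
  omega

theorem Finset.card_filter_subset_union_add_card_filter_subset_inter {α : Type*}
    [DecidableEq α] (𝒮 : Finset (Finset α)) (A B : Finset α) :
    #{s ∈ 𝒮 | s ⊆ A ∪ B} + #{s ∈ 𝒮 | s ⊆ A ∩ B} =
      #{s ∈ 𝒮 | s ⊆ A} + #{s ∈ 𝒮 | s ⊆ B} + #{s ∈ 𝒮 | s ⊆ A ∪ B ∧ ¬ s ⊆ A ∧ ¬ s ⊆ B} := by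
  have h := card_add_card_filter_and {s ∈ 𝒮 | s ⊆ A ∪ B} (· ⊆ A) (· ⊆ B)
  simp only [filter_filter] at h
  have hA : {s ∈ 𝒮 | s ⊆ A ∪ B ∧ s ⊆ A} = {s ∈ 𝒮 | s ⊆ A} :=
    filter_congr fun s _ => and_iff_right_of_imp fun h => h.trans subset_union_left
  have hB : {s ∈ 𝒮 | s ⊆ A ∪ B ∧ s ⊆ B} = {s ∈ 𝒮 | s ⊆ B} :=
    filter_congr fun s _ => and_iff_right_of_imp fun h => h.trans subset_union_right
  have hAB : {s ∈ 𝒮 | s ⊆ A ∪ B ∧ s ⊆ A ∧ s ⊆ B} = {s ∈ 𝒮 | s ⊆ A ∩ B} :=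
    filter_congr fun s _ => by
      rw [← subset_inter_iff]
      exact and_iff_right_of_imp fun h => h.trans (inter_subset_left.trans subset_union_left)
  rwa [hA, hB, hAB] at h

namespace SimpleGraph

section Cliques

variable {α : Type*} [Fintype α] [DecidableEq α] {G H : SimpleGraph α}
  [DecidableRel G.Adj] [DecidableRel H.Adj]

theorem card_filter_mem_cliqueFinset_succ (n : ℕ) (v : α) :
    #{t ∈ G.cliqueFinset (n + 1) | v ∈ t} =
      #{s ∈ G.cliqueFinset n | s ⊆ G.neighborFinset v} := by
  refine card_nbij' (·.erase v) (insert v) ?_ ?_ ?_ ?_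
  · intro t ht
    simp only [coe_filter, Set.mem_ofPred_eq, mem_cliqueFinset_iff] at ht ⊢
    refine ⟨ht.1.erase_of_mem ht.2, fun w hw => ?_⟩
    rw [mem_neighborFinset]
    exact ht.1.1 ht.2 (mem_of_mem_erase hw) (ne_of_mem_erase hw).symm
  · intro s hs
    simp only [coe_filter, Set.mem_ofPred_eq, mem_cliqueFinset_iff] at hs ⊢
    exact ⟨hs.1.insert fun w hw => (mem_neighborFinset _ _ _).1 (hs.2 hw), mem_insert_self v s⟩
  · intro t ht
    exact insert_erase (mem_filter.1 ht).2
  · intro s hs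
    refine erase_insert fun hv => ?_
    exact G.loopless.irrefl v ((mem_neighborFinset _ _ _).1 ((mem_filter.1 hs).2 hv))

theorem filter_cliqueFinset_succ_subset_empty (n : ℕ) :
    {s ∈ G.cliqueFinset (n + 1) | s ⊆ ∅} = ∅ :=
  filter_false_of_mem fun s hs hs' => by
    have hcard := (mem_cliqueFinset_iff.1 hs).2
    rw [subset_empty.1 hs', card_empty] at hcard
    exact Nat.succ_ne_zero n hcard.symm

theorem filter_subset_cliqueFinset_congr (n : ℕ) {W : Finset α}
    (h : ∀ x ∈ W, ∀ y ∈ W, G.Adj x y ↔ H.Adj x y) :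
    {s ∈ G.cliqueFinset n | s ⊆ W} = {s ∈ H.cliqueFinset n | s ⊆ W} := by
  ext s
  simp only [mem_filter, mem_cliqueFinset_iff, isNClique_iff, isClique_iff]
  constructor <;> rintro ⟨⟨hs, hcard⟩, hsW⟩ <;> refine ⟨⟨fun x hx y hy hxy => ?_, hcard⟩, hsW⟩
  · exact (h x (hsW hx) y (hsW hy)).1 (hs hx hy hxy)
  · exact (h x (hsW hx) y (hsW hy)).2 (hs hx hy hxy)

theorem card_cliqueFinset_three_eq_of_not_adj {u v : α} (huv : u ≠ v) (h : ¬ G.Adj u v) :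
    #(G.cliqueFinset 3) =
      #{s ∈ G.cliqueFinset 2 | s ⊆ G.neighborFinset u} +
        #{s ∈ G.cliqueFinset 2 | s ⊆ G.neighborFinset v} +
          #{t ∈ G.cliqueFinset 3 | t ⊆ {u, v}ᶜ} := by
  have hsplit := card_add_card_filter_and (G.cliqueFinset 3) (u ∈ ·) (v ∈ ·)
  have hboth : {t ∈ G.cliqueFinset 3 | u ∈ t ∧ v ∈ t} = ∅ :=
    filter_false_of_mem fun _ ht ⟨hu, hv⟩ => h ((mem_cliqueFinset_iff.1 ht).1 hu hv huv)
  have hneither : {t ∈ G.cliqueFinset 3 | u ∉ t ∧ v ∉ t} = {t ∈ G.cliqueFinset 3 | t ⊆ {u, v}ᶜ} :=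
    filter_congr fun t _ => by
      simp only [subset_compl_iff_disjoint_right, disjoint_insert_right, disjoint_singleton_right]
  rwa [hboth, card_empty, add_zero, card_filter_mem_cliqueFinset_succ,
    card_filter_mem_cliqueFinset_succ, hneither] at hsplit

theorem card_interedges_sdiff_eq_card_filter_cliqueFinset_two (A B : Finset α) :
    #(G.interedges (A \ B) (B \ A)) =
      #{s ∈ G.cliqueFinset 2 | s ⊆ A ∪ B ∧ ¬ s ⊆ A ∧ ¬ s ⊆ B} := by
  refine card_bij (fun p _ => {p.1, p.2}) ?_ ?_ ?_
  · rintro ⟨a, b⟩ hab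
    obtain ⟨ha, hb, hadj⟩ : a ∈ A \ B ∧ b ∈ B \ A ∧ G.Adj a b := G.mem_interedges_iff.1 hab
    rw [mem_sdiff] at ha hb
    simp only [mem_filter, mem_cliqueFinset_iff, isNClique_iff, coe_pair, isClique_pair,
      card_pair hadj.ne, insert_subset_iff, singleton_subset_iff, mem_union]
    tauto
  · rintro ⟨a, b⟩ hab ⟨c, d⟩ hcd heq
    obtain ⟨ha, hb, -⟩ := G.mem_interedges_iff.1 hab
    obtain ⟨hc, hd, -⟩ := G.mem_interedges_iff.1 hcd
    rw [mem_sdiff] at ha hb hc hd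
    have hac : a ∈ ({c, d} : Finset α) := heq ▸ mem_insert_self a {b}
    have hbd : b ∈ ({c, d} : Finset α) := heq ▸ mem_insert_of_mem (mem_singleton_self b)
    simp only [mem_insert, mem_singleton] at hac hbd
    obtain rfl : a = c := by rcases hac with rfl | rfl <;> tauto
    obtain rfl : b = d := by rcases hbd with rfl | rfl <;> tauto
    rfl
  · intro s hs
    obtain ⟨hclique, hsAB, hsA, hsB⟩ := mem_filter.1 hs
    obtain ⟨a, has, haB⟩ := not_subset.1 hsB
    obtain ⟨b, hbs, hbA⟩ := not_subset.1 hsA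
    have hA : a ∈ A := (mem_union.1 (hsAB has)).resolve_right haB
    have hB : b ∈ B := (mem_union.1 (hsAB hbs)).resolve_left hbA
    have hab : a ≠ b := by rintro rfl; exact hbA hA
    refine ⟨(a, b), G.mem_interedges_iff.2 ⟨mem_sdiff.2 ⟨hA, haB⟩, mem_sdiff.2 ⟨hB, hbA⟩,
      (mem_cliqueFinset_iff.1 hclique).1 has hbs hab⟩, ?_⟩
    refine eq_of_subset_of_card_le (insert_subset_iff.2 ⟨has, singleton_subset_iff.2 hbs⟩) ?_
    rw [(mem_cliqueFinset_iff.1 hclique).2, card_pair hab]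

theorem interedges_sdiff_neighborFinset (u v : α) :
    G.interedges (G.neighborFinset u \ G.neighborFinset v) (G.neighborFinset v \ G.neighborFinset u)
      = univ.filter fun p : α × α => G.Adj u p.1 ∧ G.Adj p.1 p.2 ∧ G.Adj p.2 v ∧
          ¬ G.Adj p.1 v ∧ ¬ G.Adj p.2 u := by
  ext ⟨a, b⟩
  simp only [mem_interedges_iff, mem_sdiff, mem_neighborFinset, mem_filter, mem_univ, true_and,
    G.adj_comm _ v, G.adj_comm b u]
  tauto

theorem filter_cliqueFinset_two_subset_inter_neighborFinset (u v : α) :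
    {s ∈ G.cliqueFinset 2 | s ⊆ G.neighborFinset u ∩ G.neighborFinset v}
      = univ.filter fun s : Finset α => #s = 2 ∧ (∀ w ∈ s, G.Adj u w ∧ G.Adj v w) ∧
          ∀ x ∈ s, ∀ y ∈ s, x ≠ y → G.Adj x y := by
  ext s
  simp only [mem_filter, mem_univ, true_and, mem_cliqueFinset_iff, isNClique_iff, isClique_iff,
    Set.Pairwise, mem_coe, subset_iff, mem_inter, mem_neighborFinset]
  tauto

end Cliques

variable {V : Type*}

def IsVertexMerge (Γ Γ' : SimpleGraph V) (u₁ u₂ : V) : Prop :=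
  ∀ x y, Γ'.Adj x y ↔ x ≠ y ∧ x ≠ u₂ ∧ y ≠ u₂ ∧
    (Γ.Adj x y ∨ (x = u₁ ∧ Γ.Adj u₂ y) ∨ (y = u₁ ∧ Γ.Adj u₂ x))

namespace IsVertexMerge

variable {Γ Γ' : SimpleGraph V} {u₁ u₂ : V}

theorem not_adj (h : Γ.IsVertexMerge Γ' u₁ u₂) : ¬ Γ'.Adj u₁ u₂ := by
  simp [h u₁ u₂]

theorem adj_iff_of_ne (h : Γ.IsVertexMerge Γ' u₁ u₂) {x y : V} (hx₁ : x ≠ u₁) (hx₂ : x ≠ u₂)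
    (hy₁ : y ≠ u₁) (hy₂ : y ≠ u₂) : Γ'.Adj x y ↔ Γ.Adj x y := by
  rw [h x y]
  grind [Γ.ne_of_adj]

variable [Fintype V] [DecidableRel Γ'.Adj]

theorem neighborFinset_right (h : Γ.IsVertexMerge Γ' u₁ u₂) : Γ'.neighborFinset u₂ = ∅ := by
  ext x
  simp [h u₂ x]

variable [DecidableEq V] [DecidableRel Γ.Adj]

theorem neighborFinset_left (h : Γ.IsVertexMerge Γ' u₁ u₂) (hne : u₁ ≠ u₂)
    (hnadj : ¬ Γ.Adj u₁ u₂) :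
    Γ'.neighborFinset u₁ = Γ.neighborFinset u₁ ∪ Γ.neighborFinset u₂ := by
  ext x
  simp only [mem_neighborFinset, mem_union, h u₁ x]
  grind [Γ.ne_of_adj, Γ.adj_symm]

theorem card_cliqueFinset_three (h : Γ.IsVertexMerge Γ' u₁ u₂) (hne : u₁ ≠ u₂)
    (hnadj : ¬ Γ.Adj u₁ u₂) :
    #(Γ'.cliqueFinset 3) =
      #{s ∈ Γ.cliqueFinset 2 | s ⊆ Γ.neighborFinset u₁ ∪ Γ.neighborFinset u₂} +
        #{t ∈ Γ.cliqueFinset 3 | t ⊆ {u₁, u₂}ᶜ} := by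
  have hN : ∀ x ∈ Γ.neighborFinset u₁ ∪ Γ.neighborFinset u₂,
      ∀ y ∈ Γ.neighborFinset u₁ ∪ Γ.neighborFinset u₂, Γ'.Adj x y ↔ Γ.Adj x y := by
    have hne' : ∀ x ∈ Γ.neighborFinset u₁ ∪ Γ.neighborFinset u₂, x ≠ u₁ ∧ x ≠ u₂ := by
      simp only [mem_union, mem_neighborFinset]
      grind [Γ.ne_of_adj, Γ.adj_symm]
    exact fun x hx y hy => h.adj_iff_of_ne (hne' x hx).1 (hne' x hx).2 (hne' y hy).1 (hne' y hy).2
  have hoff : ∀ x ∈ ({u₁, u₂}ᶜ : Finset V), ∀ y ∈ ({u₁, u₂}ᶜ : Finset V),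
      Γ'.Adj x y ↔ Γ.Adj x y := by
    simp only [mem_compl, mem_insert, mem_singleton, not_or]
    exact fun x ⟨hx₁, hx₂⟩ y ⟨hy₁, hy₂⟩ => h.adj_iff_of_ne hx₁ hx₂ hy₁ hy₂
  rw [card_cliqueFinset_three_eq_of_not_adj hne h.not_adj, h.neighborFinset_right,
    filter_cliqueFinset_succ_subset_empty, card_empty, add_zero, h.neighborFinset_left hne hnadj,
    filter_subset_cliqueFinset_congr 2 hN, filter_subset_cliqueFinset_congr 3 hoff]

end IsVertexMerge

end SimpleGraph

open SimpleGraph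

theorem triangleCount_eq_card_cliqueFinset {V : Type*} [Fintype V] [DecidableEq V]
    (G : SimpleGraph V) [DecidableRel G.Adj] : triangleCount G = #(G.cliqueFinset 3) := by
  unfold triangleCount cliqueFinset
  congr 1
  ext t
  simp [isNClique_iff, isClique_iff, Set.Pairwise, and_comm]

/-- Identifying two nonadjacent vertices `u₁, u₂` of a simple graph `Γ` (and
simplifying) changes the triangle count by `+Q - S`, where `Q` is the number
of paths of length three from `u₁` to `u₂` no interior vertex of which is
adjacent to both `u₁` and `u₂`, and `S` is the number of 4-vertex subsets
`{u₁, u₂, w₁, w₂}` with `w₁ ~ w₂` and each of `w₁, w₂` adjacent to both `u₁`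
and `u₂`.  The identified graph `Γ'` is realized on the same vertex set, with
`u₂` made isolated and its adjacencies transferred to `u₁`. -/
theorem triangleCount_identify {V : Type*} [Fintype V] [DecidableEq V]
    (Γ : SimpleGraph V) [DecidableRel Γ.Adj]
    (u₁ u₂ : V) (hne : u₁ ≠ u₂) (hnadj : ¬ Γ.Adj u₁ u₂)
    (Γ' : SimpleGraph V)
    (hΓ' : ∀ x y, Γ'.Adj x y ↔ x ≠ y ∧ x ≠ u₂ ∧ y ≠ u₂ ∧
      (Γ.Adj x y ∨ (x = u₁ ∧ Γ.Adj u₂ y) ∨ (y = u₁ ∧ Γ.Adj u₂ x)))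
    (Q S : ℕ)
    (hQ : Q = (Finset.univ.filter fun p : V × V =>
      Γ.Adj u₁ p.1 ∧ Γ.Adj p.1 p.2 ∧ Γ.Adj p.2 u₂ ∧
        ¬ Γ.Adj p.1 u₂ ∧ ¬ Γ.Adj p.2 u₁).card)
    (hS : S = (Finset.univ.filter fun s : Finset V =>
      s.card = 2 ∧ (∀ w ∈ s, Γ.Adj u₁ w ∧ Γ.Adj u₂ w) ∧
        ∀ x ∈ s, ∀ y ∈ s, x ≠ y → Γ.Adj x y).card) :
    (triangleCount Γ' : ℤ) = (triangleCount Γ : ℤ) + (Q : ℤ) - (S : ℤ) := by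
  classical
  have hmerge : Γ.IsVertexMerge Γ' u₁ u₂ := hΓ'
  have hcross := card_filter_subset_union_add_card_filter_subset_inter (Γ.cliqueFinset 2)
    (Γ.neighborFinset u₁) (Γ.neighborFinset u₂)
  rw [← card_interedges_sdiff_eq_card_filter_cliqueFinset_two, interedges_sdiff_neighborFinset,
    filter_cliqueFinset_two_subset_inter_neighborFinset] at hcross
  rw [triangleCount_eq_card_cliqueFinset, triangleCount_eq_card_cliqueFinset,
    hmerge.card_cliqueFinset_three hne hnadj, card_cliqueFinset_three_eq_of_not_adj hne hnadj,
    hQ, hS]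
  omega
end

section
/- Let Γ be a finite multigraph with distinct vertices u_1, u_2, and let Γ' be the multigraph obtained by identifying u_1 and u_2. Let μ(Γ) denote the number of edges of the simplification of Γ that come from multiple (parallel) edges of Γ, and similarly μ(Γ'). Suppose no edge of Γ joins u_1 to u_2. Then μ(Γ) - μ(Γ') = P_2 - P_0, where P_i is the number of length-two paths in the simplification of Γ between u_1 and u_2 exactly i of whose two edges come from multiple edges of Γ. -/
open Finset

lemma pair_split {V : Type*} [Fintype V] [DecidableEq V]
    (M : V → V → ℕ) (hsM : ∀ x y, M x y = M y x)
    (t : Finset V) (u : V) (hu : u ∈ t) :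
    (t.powerset.filter fun s => s.card = 2 ∧ ∀ x ∈ s, ∀ y ∈ s, x ≠ y → 2 ≤ M x y).card
    = ((t.erase u).powerset.filter fun s => s.card = 2 ∧ ∀ x ∈ s, ∀ y ∈ s, x ≠ y → 2 ≤ M x y).card
    + ((t.erase u).filter fun w => 2 ≤ M u w).card := by
  have hs : ∀ x y, 2 ≤ M x y → 2 ≤ M y x := fun x y h => by rwa [hsM y x]
  set p : V → V → Prop := fun x y => 2 ≤ M x y with hp
  classical
  have hsplit : (t.powerset.filter fun s => s.card = 2 ∧ ∀ x ∈ s, ∀ y ∈ s, x ≠ y → p x y)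
      = ((t.erase u).powerset.filter fun s => s.card = 2 ∧ ∀ x ∈ s, ∀ y ∈ s, x ≠ y → p x y)
      ∪ (t.powerset.filter fun s => u ∈ s ∧ s.card = 2 ∧ ∀ x ∈ s, ∀ y ∈ s, x ≠ y → p x y) := by
    ext s
    simp only [mem_union, mem_filter, mem_powerset, subset_erase]
    by_cases h : u ∈ s <;> aesop
  rw [hsplit, card_union_of_disjoint, add_right_inj]
  · symm
    apply Finset.card_bij (fun w _ => insert u {w})
    · intro w hw
      simp only [mem_filter, mem_erase] at hw
      obtain ⟨⟨hwu, hwt⟩, hpw⟩ := hw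
      refine mem_filter.mpr ⟨mem_powerset.mpr ?_, mem_insert_self _ _, ?_, ?_⟩
      · intro x hx
        simp only [mem_insert, mem_singleton] at hx
        rcases hx with rfl | rfl
        · exact hu
        · exact hwt
      · rw [card_insert_of_notMem (by simp [Ne.symm hwu]), card_singleton]
      · intro x hx y hy hxy
        simp only [mem_insert, mem_singleton] at hx hy
        rcases hx with rfl | rfl <;> rcases hy with rfl | rfl
        · exact absurd rfl hxy
        · exact hpw
        · exact hs _ _ hpw
        · exact absurd rfl hxy
    · intro a ha b hb hab
      have : a ∈ insert u ({b} : Finset V) := by rw [← hab]; simp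
      simp only [mem_insert, mem_singleton] at this
      rcases this with rfl | rfl
      · simp only [mem_filter, mem_erase] at ha; exact absurd rfl ha.1.1
      · rfl
    · intro s hsmem
      simp only [mem_filter, mem_powerset] at hsmem
      obtain ⟨hsub, hus, hcard, hp⟩ := hsmem
      obtain ⟨x, y, hxy, rfl⟩ := Finset.card_eq_two.mp hcard
      have hxy' : u = x ∨ u = y := by
        simpa using hus
      rcases hxy' with rfl | rfl
      · refine ⟨y, ?_, ?_⟩
        · simp only [mem_filter, mem_erase]
          exact ⟨⟨Ne.symm hxy, hsub (by simp)⟩, hp u (by simp) y (by simp) hxy⟩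
        · simp
      · refine ⟨x, ?_, ?_⟩
        · simp only [mem_filter, mem_erase]
          exact ⟨⟨hxy, hsub (by simp)⟩, hp u (by simp) x (by simp) (Ne.symm hxy)⟩
        · exact Finset.pair_comm u x
  · rw [Finset.disjoint_left]
    intro s hs1 hs2
    simp only [mem_filter, mem_powerset, subset_erase] at hs1 hs2
    exact hs1.1.2 hs2.2.1

/-- Equation (5) in the proof of Theorem 3.3.  A multigraph is encoded by a
symmetric loopless edge-multiplicity function `m : V → V → ℕ`.  `μ` counts
edges of the simplification coming from multiple (parallel) edges, i.e. pairs
`{x,y}` with `m x y ≥ 2`.  If no edge joins `u₁` to `u₂` and `Γ'` (with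
multiplicity `m'`) is obtained by identifying `u₁` and `u₂` (transferring the
adjacencies of `u₂` to `u₁`), then `μ(Γ) - μ(Γ') = P₂ - P₀`, where `P_i` is
the number of length-two paths of the simplification between `u₁` and `u₂`
exactly `i` of whose two edges come from multiple edges. -/
theorem mu_identify {V : Type*} [Fintype V] [DecidableEq V]
    (m : V → V → ℕ) (hsymm : ∀ x y, m x y = m y x) (hloop : ∀ x, m x x = 0)
    (u₁ u₂ : V) (hne : u₁ ≠ u₂) (hno : m u₁ u₂ = 0)
    (m' : V → V → ℕ)
    (hm' : ∀ x y, m' x y = if x = u₂ ∨ y = u₂ then 0 else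
      m x y + (if x = u₁ then m u₂ y else 0) + (if y = u₁ then m x u₂ else 0))
    (μ μ' P₀ P₂ : ℕ)
    (hμ : μ = (Finset.univ.filter fun s : Finset V =>
      s.card = 2 ∧ ∀ x ∈ s, ∀ y ∈ s, x ≠ y → 2 ≤ m x y).card)
    (hμ' : μ' = (Finset.univ.filter fun s : Finset V =>
      s.card = 2 ∧ ∀ x ∈ s, ∀ y ∈ s, x ≠ y → 2 ≤ m' x y).card)
    (hP₀ : P₀ = (Finset.univ.filter fun w : V =>
      m u₁ w = 1 ∧ m w u₂ = 1).card)
    (hP₂ : P₂ = (Finset.univ.filter fun w : V =>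
      2 ≤ m u₁ w ∧ 2 ≤ m w u₂).card) :
    (μ : ℤ) - (μ' : ℤ) = (P₂ : ℤ) - (P₀ : ℤ) := by
  classical
  subst hμ hμ' hP₀ hP₂
  have hsymm' : ∀ x y, m' x y = m' y x := by
    intro x y
    rw [hm' x y, hm' y x]
    have e1 := hsymm y x
    have e2 := hsymm u₂ y
    have e3 := hsymm x u₂
    split_ifs <;> first | rfl | tauto | omega
  have hu1 : u₁ ∈ (Finset.univ : Finset V).erase u₂ := by simp [hne]
  rw [show (Finset.univ : Finset (Finset V)) = (Finset.univ : Finset V).powerset from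
    (Finset.powerset_univ).symm]
  rw [pair_split m hsymm Finset.univ u₂ (mem_univ _),
      pair_split m hsymm _ u₁ hu1,
      pair_split m' hsymm' Finset.univ u₂ (mem_univ _),
      pair_split m' hsymm' _ u₁ hu1]
  -- the pair sets avoiding u₁, u₂ coincide for m and m'
  have hA : ((((Finset.univ : Finset V).erase u₂).erase u₁).powerset.filter
        fun s => s.card = 2 ∧ ∀ x ∈ s, ∀ y ∈ s, x ≠ y → 2 ≤ m' x y)
      = ((((Finset.univ : Finset V).erase u₂).erase u₁).powerset.filter
        fun s => s.card = 2 ∧ ∀ x ∈ s, ∀ y ∈ s, x ≠ y → 2 ≤ m x y) := by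
    apply Finset.filter_congr
    intro s hsub
    simp only [mem_powerset, subset_erase] at hsub
    obtain ⟨⟨hs2, hns2⟩, hns1⟩ := hsub
    have hkey : ∀ x ∈ s, ∀ y ∈ s, m' x y = m x y := by
      intro x hx y hy
      have hx1 : x ≠ u₁ := fun h => hns1 (h ▸ hx)
      have hx2 : x ≠ u₂ := fun h => hns2 (h ▸ hx)
      have hy1 : y ≠ u₁ := by
        intro h; subst h
        exact hns1 hy
      have hy2 : y ≠ u₂ := by
        intro h; subst h
        exact hns2 hy
      rw [hm']
      simp [hx1, hx2, hy1, hy2]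
    constructor <;> (rintro ⟨h1, h2⟩; refine ⟨h1, fun x hx y hy hxy => ?_⟩)
    · rw [← hkey x hx y hy]; exact h2 x hx y hy hxy
    · rw [hkey x hx y hy]; exact h2 x hx y hy hxy
  rw [hA]
  -- no pair involves u₂ in Γ'
  have hZ : (((Finset.univ : Finset V).erase u₂).filter fun w => 2 ≤ m' u₂ w) = ∅ := by
    apply Finset.filter_false_of_mem
    intro w _
    rw [hm']
    simp
  rw [hZ]
  -- now reduce to a sum identity over vertices
  have e1 : (((Finset.univ : Finset V).erase u₂).erase u₁).filter (fun w => 2 ≤ m u₁ w)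
      = Finset.univ.filter (fun w => w ≠ u₁ ∧ w ≠ u₂ ∧ 2 ≤ m u₁ w) := by
    ext w; simp only [mem_filter, mem_erase, mem_univ, true_and]; tauto
  have e2 : (((Finset.univ : Finset V).erase u₂)).filter (fun w => 2 ≤ m u₂ w)
      = Finset.univ.filter (fun w => w ≠ u₂ ∧ 2 ≤ m u₂ w) := by
    ext w; simp only [mem_filter, mem_erase, mem_univ, true_and]; tauto
  have e3 : (((Finset.univ : Finset V).erase u₂).erase u₁).filter (fun w => 2 ≤ m' u₁ w)
      = Finset.univ.filter (fun w => w ≠ u₁ ∧ w ≠ u₂ ∧ 2 ≤ m u₁ w + m u₂ w) := by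
    ext w
    simp only [mem_filter, mem_erase, mem_univ, true_and]
    constructor
    · rintro ⟨⟨h1, h2, -⟩, h3⟩
      rw [hm'] at h3
      simp [h1, h2, hne] at h3
      exact ⟨h1, h2, h3⟩
    · rintro ⟨h1, h2, h3⟩
      refine ⟨⟨h1, h2, trivial⟩, ?_⟩
      rw [hm']
      simpa [h1, h2, hne] using h3
  rw [e1, e2, e3]
  have key :
      (Finset.univ.filter (fun w : V => w ≠ u₁ ∧ w ≠ u₂ ∧ 2 ≤ m u₁ w)).card
      + (Finset.univ.filter (fun w : V => w ≠ u₂ ∧ 2 ≤ m u₂ w)).card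
      + (Finset.univ.filter (fun w : V => m u₁ w = 1 ∧ m w u₂ = 1)).card
      = (Finset.univ.filter (fun w : V => w ≠ u₁ ∧ w ≠ u₂ ∧ 2 ≤ m u₁ w + m u₂ w)).card
      + (Finset.univ.filter (fun w : V => 2 ≤ m u₁ w ∧ 2 ≤ m w u₂)).card := by
    simp only [Finset.card_filter]
    rw [← Finset.sum_add_distrib, ← Finset.sum_add_distrib, ← Finset.sum_add_distrib]
    apply Finset.sum_congr rfl
    intro w _
    by_cases h1 : w = u₁
    · subst h1
      have : m u₂ w = 0 := by rw [hsymm]; exact hno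
      simp [hloop, hno, this]
    · by_cases h2 : w = u₂
      · subst h2
        simp [hloop, hno, hsymm u₁ w]
      · have hb : m w u₂ = m u₂ w := hsymm w u₂
        simp only [h1, h2, hb, ne_eq, not_false_iff, true_and]
        split_ifs <;> omega
  push_cast [Nat.card_eq_zero, Finset.card_empty] at *
  omega
end
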